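/- arXiv:1609.03703 — 4 statements merged into one kernel-verified Lean document; each statement's English description precedes it below -/
import Mathlib

section
/- There do not exist nonnegative real numbers b, c, d with b + c + d = 1 that simultaneously satisfy the six fixed-point equations: b = 0.1 + 0.28·b/(0.4b + 0.3c + 0.8d), b = 0.1 + 0.42·b/(0.6b + 0.7c + 0.2d), c = 0.2 + 0.21·c/(0.4b + 0.3c + 0.8d), c = 0.2 + 0.49·c/(0.6b + 0.7c + 0.2d), d = 0.56·d/(0.4b + 0.3c + 0.8d), and d = 0.14·d/(0.6b + 0.7c + 0.2d). -/
/-!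
The two denominators are the probabilities of observing `H` and `T`, so they sum to
`b + c + d = 1`. Clearing denominators in the `H`- and `T`-equation for one coordinate and
adding them therefore eliminates the denominators: `x - a = (u + v) x`. With `u + v = 0.7` this
forces `b = 1/3`, `c = 2/3`, `d = 0`, and this point violates the `H`-equation for `b`.
-/

lemma sub_eq_mul_of_fixedPoint_pair {x a u v D₁ D₂ : ℝ} (hD₁ : D₁ ≠ 0) (hD₂ : D₂ ≠ 0)
    (hD : D₁ + D₂ = 1) (h₁ : x = a + u * x / D₁) (h₂ : x = a + v * x / D₂) :
    x - a = (u + v) * x := by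
  rw [← sub_eq_iff_eq_add', eq_div_iff hD₁] at h₁
  rw [← sub_eq_iff_eq_add', eq_div_iff hD₂] at h₂
  linear_combination h₁ + h₂ - (x - a) * hD

/-- There do not exist nonnegative reals `b, c, d` with `b + c + d = 1`
satisfying the six fixed-point equations of the three-agent weakly-connected example. -/
theorem stmt_7 :
    ¬ ∃ b c d : ℝ, 0 ≤ b ∧ 0 ≤ c ∧ 0 ≤ d ∧ b + c + d = 1 ∧
      b = 0.1 + 0.28 * b / (0.4 * b + 0.3 * c + 0.8 * d) ∧
      b = 0.1 + 0.42 * b / (0.6 * b + 0.7 * c + 0.2 * d) ∧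
      c = 0.2 + 0.21 * c / (0.4 * b + 0.3 * c + 0.8 * d) ∧
      c = 0.2 + 0.49 * c / (0.6 * b + 0.7 * c + 0.2 * d) ∧
      d = 0.56 * d / (0.4 * b + 0.3 * c + 0.8 * d) ∧
      d = 0.14 * d / (0.6 * b + 0.7 * c + 0.2 * d) := by
  rintro ⟨b, c, d, hb, hc, hd, hsum, hbH, hbT, -, -, hdH, hdT⟩
  have hDH : (0.4 * b + 0.3 * c + 0.8 * d : ℝ) ≠ 0 := by linarith
  have hDT : (0.6 * b + 0.7 * c + 0.2 * d : ℝ) ≠ 0 := by linarith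
  have hD : (0.4 * b + 0.3 * c + 0.8 * d) + (0.6 * b + 0.7 * c + 0.2 * d) = 1 := by linarith
  have hb' := sub_eq_mul_of_fixedPoint_pair hDH hDT hD hbH hbT
  have hd' := sub_eq_mul_of_fixedPoint_pair hDH hDT hD
    (hdH.trans (zero_add _).symm) (hdT.trans (zero_add _).symm)
  obtain rfl : b = 1 / 3 := by linarith
  obtain rfl : d = 0 := by linarith
  obtain rfl : c = 2 / 3 := by linarith
  norm_num at hbH
end

section
/- Assume μ_{k,0}(θ°) > 0 for at least one agent k and that the self-awareness weights satisfy liminf_{i→∞} γ_{k,i} > 0 for every agent k. Then every self-aware agent develops correct forecasting: for every agent k and every ζ ∈ Z_k, m_{k,i}(ζ) → L_k(ζ|θ°) almost surely as i → ∞. -/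
/-!
Let `v` be a positive right Perron vector of the combination matrix `A`, i.e. `A v = v`. Once
every agent gives positive weight to `θ°` (from the primitivity exponent on), concavity of `log`
in both the self-aware update and the combination step shows that the Lyapunov function
`S_i = ∑ₖ vₖ log μ_{k,i}(θ°)` increases at least by `∑ₖ vₖ γ_{k,i} log (L_k(ξ|θ°) / m_{k,i}(ξ))`.
The new signals are independent of the past, so the expected increment is
`∑ₖ vₖ γ_{k,i} KL(L_k(·|θ°) ‖ m_{k,i})`. As `S_i ≤ 0` these expectations are summable, hence the
weighted divergences tend to `0` almost surely. Since `liminf γ_{k,i} > 0`, so do the divergences,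
and the Hellinger bound `KL(p ‖ q) ≥ ∑ (√q - √p)²` turns this into `m_{k,i} → L_k(·|θ°)`.
-/

open MeasureTheory ProbabilityTheory Filter Finset Topology Matrix

section RelEntropy

variable {α : Type*} [Fintype α]

noncomputable def relEntropy (p q : α → ℝ) : ℝ := ∑ a, p a * Real.log (p a / q a)

lemma sq_sqrt_sub_sqrt_add_sub_le_mul_log_div {p q : ℝ} (hp : 0 < p) (hq : 0 < q) :
    (√q - √p) ^ 2 + (p - q) ≤ p * Real.log (p / q) := by
  obtain ⟨s, hs, rfl⟩ : ∃ s, 0 < s ∧ s ^ 2 = p := ⟨√p, Real.sqrt_pos.2 hp, Real.sq_sqrt hp.le⟩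
  obtain ⟨t, ht, rfl⟩ : ∃ t, 0 < t ∧ t ^ 2 = q := ⟨√q, Real.sqrt_pos.2 hq, Real.sq_sqrt hq.le⟩
  have hlog : 1 - t / s ≤ Real.log (s / t) := by
    simpa using Real.one_sub_inv_le_log_of_pos (div_pos hs ht)
  rw [Real.sqrt_sq hs.le, Real.sqrt_sq ht.le, ← div_pow, Real.log_pow]
  calc (t - s) ^ 2 + (s ^ 2 - t ^ 2) = 2 * s ^ 2 * (1 - t / s) := by field_simp; ring
    _ ≤ 2 * s ^ 2 * Real.log (s / t) := by gcongr
    _ = s ^ 2 * ((2 : ℕ) * Real.log (s / t)) := by push_cast; ring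

lemma sum_sq_sqrt_sub_sqrt_le_relEntropy {p q : α → ℝ} (hp : ∀ a, 0 < p a) (hq : ∀ a, 0 < q a)
    (hsum : ∑ a, q a = ∑ a, p a) : ∑ a, (√(q a) - √(p a)) ^ 2 ≤ relEntropy p q :=
  calc ∑ a, (√(q a) - √(p a)) ^ 2 = ∑ a, ((√(q a) - √(p a)) ^ 2 + (p a - q a)) := by
        rw [sum_add_distrib, sum_sub_distrib, hsum, sub_self, add_zero]
    _ ≤ relEntropy p q :=
        sum_le_sum fun a _ => sq_sqrt_sub_sqrt_add_sub_le_mul_log_div (hp a) (hq a)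

lemma relEntropy_nonneg {p q : α → ℝ} (hp : ∀ a, 0 < p a) (hq : ∀ a, 0 < q a)
    (hsum : ∑ a, q a = ∑ a, p a) : 0 ≤ relEntropy p q :=
  (sum_nonneg fun _ _ => sq_nonneg _).trans (sum_sq_sqrt_sub_sqrt_le_relEntropy hp hq hsum)

lemma tendsto_of_tendsto_relEntropy_zero {β : Type*} {l : Filter β} {p : α → ℝ} {q : β → α → ℝ}
    (hp : ∀ a, 0 < p a) (hq : ∀ b a, 0 < q b a) (hsum : ∀ b, ∑ a, q b a = ∑ a, p a)
    (h : Tendsto (fun b => relEntropy p (q b)) l (𝓝 0)) (a : α) :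
    Tendsto (fun b => q b a) l (𝓝 (p a)) := by
  have hsq : Tendsto (fun b => (√(q b a) - √(p a)) ^ 2) l (𝓝 0) :=
    squeeze_zero (fun _ => sq_nonneg _) (fun b =>
      (single_le_sum (f := fun a => (√(q b a) - √(p a)) ^ 2) (fun _ _ => sq_nonneg _)
        (mem_univ a)).trans (sum_sq_sqrt_sub_sqrt_le_relEntropy hp (hq b) (hsum b))) h
  have hsqrt : Tendsto (fun b => √(q b a)) l (𝓝 (√(p a))) := by
    have := (Real.continuous_sqrt.tendsto 0).comp hsq
    simp only [Real.sqrt_zero, Function.comp_def, Real.sqrt_sq_eq_abs] at this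
    exact tendsto_iff_norm_sub_tendsto_zero.2 this
  simpa [Real.sq_sqrt (hq _ a).le, Real.sq_sqrt (hp a).le] using hsqrt.pow 2

end RelEntropy

lemma tendsto_zero_of_tendsto_mul_zero_of_liminf_pos {x γ : ℕ → ℝ} (hγ₀ : ∀ i, 0 ≤ γ i)
    (hγ : 0 < liminf γ atTop) (h : Tendsto (fun i => γ i * x i) atTop (𝓝 0)) :
    Tendsto x atTop (𝓝 0) := by
  have hev : ∀ᶠ i in atTop, liminf γ atTop / 2 < γ i :=
    eventually_lt_of_lt_liminf (half_lt_self hγ) (isBoundedUnder_of ⟨0, hγ₀⟩)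
  refine squeeze_zero_norm' ?_ (by simpa using h.norm.div_const (liminf γ atTop / 2))
  filter_upwards [hev] with i hi
  rw [le_div_iff₀ (half_pos hγ), Real.norm_eq_abs, abs_of_nonneg (hγ₀ i), mul_comm (γ i)]
  exact mul_le_mul_of_nonneg_left hi.le (abs_nonneg _)

namespace Matrix

variable {n : Type*} [Fintype n] [DecidableEq n] {M : Matrix n n ℝ}

lemma exists_nonneg_ne_zero_mulVec_eq_self [Nonempty n] (hM : M ∈ colStochastic ℝ n) :
    ∃ v : n → ℝ, (∀ i, 0 ≤ v i) ∧ v ≠ 0 ∧ M *ᵥ v = v := by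
  have hdet : (M - 1).det = 0 := by
    rw [← det_transpose, transpose_sub, transpose_one, ← exists_mulVec_eq_zero_iff]
    refine ⟨1, one_ne_zero, ?_⟩
    rw [sub_mulVec, mulVec_transpose, one_vecMul_of_mem_colStochastic hM, one_mulVec, sub_self]
  obtain ⟨w, hw, hMw⟩ := exists_mulVec_eq_zero_iff.2 hdet
  rw [sub_mulVec, one_mulVec, sub_eq_zero] at hMw
  -- `M |w| ≥ |M w| = |w|` entrywise, and both sides have the same total mass
  have hle : ∀ i, |w i| ≤ (M *ᵥ fun j => |w j|) i := fun i => by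
    conv_lhs => rw [← hMw]
    refine (abs_sum_le_sum_abs _ _).trans_eq (sum_congr rfl fun j _ => ?_)
    rw [abs_mul, abs_of_nonneg (nonneg_of_mem_colStochastic hM)]
  have hsum : ∑ i, ((M *ᵥ fun j => |w j|) i - |w i|) = 0 := by
    rw [sum_sub_distrib, sum_mulVec_of_mem_colStochastic hM, sub_self]
  refine ⟨fun i => |w i|, fun i => abs_nonneg _, fun h => hw ?_, ?_⟩
  · ext i; simpa using congr_fun h i
  · ext i
    have := (sum_eq_zero_iff_of_nonneg fun i _ => sub_nonneg.2 (hle i)).1 hsum i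
      (mem_univ i)
    linarith

lemma exists_pos_mulVec_eq_self [Nonempty n] (hM : M ∈ colStochastic ℝ n) {p : ℕ}
    (hp : ∀ i j, 0 < (M ^ p) i j) : ∃ v : n → ℝ, (∀ i, 0 < v i) ∧ M *ᵥ v = v := by
  obtain ⟨v, hv0, hv, hMv⟩ := exists_nonneg_ne_zero_mulVec_eq_self hM
  obtain ⟨j, hj⟩ := Function.ne_iff.1 hv
  have hpow : ∀ m, (M ^ m) *ᵥ v = v := fun m => by
    induction m with
    | zero => simp
    | succ m ih => rw [pow_succ, ← mulVec_mulVec, hMv, ih]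
  refine ⟨v, fun i => ?_, hMv⟩
  rw [← hpow p]
  exact sum_pos' (fun k _ => mul_nonneg (hp i k).le (hv0 k))
    ⟨j, mem_univ j, mul_pos (hp i j) ((hv0 j).lt_of_ne' hj)⟩

lemma pow_pos_of_le (hM : M ∈ colStochastic ℝ n) {p m : ℕ} (hp : ∀ i j, 0 < (M ^ p) i j)
    (hpm : p ≤ m) (i j : n) : 0 < (M ^ m) i j := by
  have hcol := sum_col_of_mem_colStochastic (pow_mem hM (m - p)) j
  obtain ⟨k, -, hk⟩ := exists_lt_of_sum_lt (s := univ) (f := fun _ => (0 : ℝ))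
    (g := fun k => (M ^ (m - p)) k j) (by simp [hcol])
  rw [← Nat.add_sub_cancel' hpm, pow_add, mul_apply]
  exact sum_pos' (fun l _ => mul_nonneg (hp i l).le ((pow_mem hM (m - p)).1 l j))
    ⟨k, mem_univ k, mul_pos (hp i k) hk⟩

end Matrix

lemma mul_log_le_log_one_sub_add_mul {γ t : ℝ} (hγ : γ ∈ Set.Icc (0 : ℝ) 1) (ht : 0 < t) :
    γ * Real.log t ≤ Real.log (1 - γ + γ * t) := by
  have := strictConcaveOn_log_Ioi.concaveOn.2 (Set.mem_Ioi.2 one_pos) (Set.mem_Ioi.2 ht)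
    (sub_nonneg.2 hγ.2) hγ.1 (sub_add_cancel 1 γ)
  simpa using this

lemma one_sub_add_mul_pos {γ t : ℝ} (hγ : γ ∈ Set.Icc (0 : ℝ) 1) (ht : 0 < t) :
    0 < 1 - γ + γ * t := by
  rcases hγ.1.eq_or_lt with rfl | h
  · simp
  · nlinarith [hγ.2]

section SelfAwareUpdate

variable {Θ : Type*} [Fintype Θ] {π ℓ : Θ → ℝ}

lemma sum_mul_pos_of_mem_stdSimplex (hπ : π ∈ stdSimplex ℝ Θ) (hℓ : ∀ θ, 0 < ℓ θ) :
    0 < ∑ θ, π θ * ℓ θ := by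
  obtain ⟨θ, -, hθ⟩ := exists_lt_of_sum_lt (s := univ) (f := fun _ => (0 : ℝ)) (g := π)
    (by simp [hπ.2])
  exact sum_pos' (fun θ _ => mul_nonneg (hπ.1 θ) (hℓ θ).le) ⟨θ, mem_univ θ, mul_pos hθ (hℓ θ)⟩

/-- The paper's `ψ`, where `ℓ θ` is the likelihood of the observed signal under `θ`. -/
noncomputable def selfAwareUpdate (γ : ℝ) (π ℓ : Θ → ℝ) (θ : Θ) : ℝ :=
  (1 - γ) * π θ + γ * (π θ * ℓ θ / ∑ θ', π θ' * ℓ θ')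

lemma selfAwareUpdate_eq_mul (γ : ℝ) (π ℓ : Θ → ℝ) (θ : Θ) :
    selfAwareUpdate γ π ℓ θ = π θ * (1 - γ + γ * (ℓ θ / ∑ θ', π θ' * ℓ θ')) := by
  unfold selfAwareUpdate; ring

variable {γ : ℝ}

lemma selfAwareUpdate_mem_stdSimplex (hγ : γ ∈ Set.Icc (0 : ℝ) 1) (hπ : π ∈ stdSimplex ℝ Θ)
    (hℓ : ∀ θ, 0 < ℓ θ) : selfAwareUpdate γ π ℓ ∈ stdSimplex ℝ Θ := by
  have hD := sum_mul_pos_of_mem_stdSimplex hπ hℓ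
  refine ⟨fun θ => ?_, ?_⟩
  · rw [selfAwareUpdate_eq_mul]
    exact mul_nonneg (hπ.1 θ) (one_sub_add_mul_pos hγ (div_pos (hℓ θ) hD)).le
  · simp only [selfAwareUpdate, sum_add_distrib, ← mul_sum, ← sum_div, hπ.2, div_self hD.ne']
    ring

lemma selfAwareUpdate_pos (hγ : γ ∈ Set.Icc (0 : ℝ) 1) (hπ : π ∈ stdSimplex ℝ Θ)
    (hℓ : ∀ θ, 0 < ℓ θ) {θ : Θ} (hθ : 0 < π θ) : 0 < selfAwareUpdate γ π ℓ θ := by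
  rw [selfAwareUpdate_eq_mul]
  exact mul_pos hθ (one_sub_add_mul_pos hγ (div_pos (hℓ θ) (sum_mul_pos_of_mem_stdSimplex hπ hℓ)))

lemma log_add_mul_log_le_log_selfAwareUpdate (hγ : γ ∈ Set.Icc (0 : ℝ) 1)
    (hπ : π ∈ stdSimplex ℝ Θ) (hℓ : ∀ θ, 0 < ℓ θ) {θ : Θ} (hθ : 0 < π θ) :
    Real.log (π θ) + γ * Real.log (ℓ θ / ∑ θ', π θ' * ℓ θ') ≤
      Real.log (selfAwareUpdate γ π ℓ θ) := by
  have ht := div_pos (hℓ θ) (sum_mul_pos_of_mem_stdSimplex hπ hℓ)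
  rw [selfAwareUpdate_eq_mul, Real.log_mul hθ.ne' (one_sub_add_mul_pos hγ ht).ne']
  exact add_le_add_right (mul_log_le_log_one_sub_add_mul hγ ht) _

end SelfAwareUpdate

section Forecast

variable {Θ Z : Type*} [Fintype Θ]

noncomputable def forecast (π : Θ → ℝ) (L : Θ → Z → ℝ) (ζ : Z) : ℝ := ∑ θ, π θ * L θ ζ

variable {π : Θ → ℝ} {L : Θ → Z → ℝ}

lemma forecast_pos (hπ : π ∈ stdSimplex ℝ Θ) (hL : ∀ θ ζ, 0 < L θ ζ) (ζ : Z) :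
    0 < forecast π L ζ :=
  sum_mul_pos_of_mem_stdSimplex hπ fun θ => hL θ ζ

lemma sum_forecast [Fintype Z] (hπ : π ∈ stdSimplex ℝ Θ) (hL : ∀ θ, ∑ ζ, L θ ζ = 1) :
    ∑ ζ, forecast π L ζ = 1 := by
  simp only [forecast]
  rw [sum_comm]
  simp [← mul_sum, hL, hπ.2]

end Forecast

section DiffusionStep

variable {ι Θ : Type*} [Fintype ι] [DecidableEq ι] [Fintype Θ] {A : Matrix ι ι ℝ}
  {γ : ι → ℝ} {ℓ π : ι → Θ → ℝ}

noncomputable def diffusionStep (A : Matrix ι ι ℝ) (γ : ι → ℝ) (ℓ π : ι → Θ → ℝ)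
    (k : ι) (θ : Θ) : ℝ :=
  ∑ l, A l k * selfAwareUpdate (γ l) (π l) (ℓ l) θ

lemma diffusionStep_mem_stdSimplex (hA : A ∈ colStochastic ℝ ι)
    (hγ : ∀ l, γ l ∈ Set.Icc (0 : ℝ) 1) (hπ : ∀ l, π l ∈ stdSimplex ℝ Θ)
    (hℓ : ∀ l θ, 0 < ℓ l θ) (k : ι) : diffusionStep A γ ℓ π k ∈ stdSimplex ℝ Θ := by
  have : diffusionStep A γ ℓ π k = ∑ l, A l k • selfAwareUpdate (γ l) (π l) (ℓ l) := by
    ext θ; simp [diffusionStep]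
  rw [this]
  exact (convex_stdSimplex ℝ Θ).sum_mem (fun l _ => hA.1 l k)
    (sum_col_of_mem_colStochastic hA k)
    (fun l _ => selfAwareUpdate_mem_stdSimplex (hγ l) (hπ l) (hℓ l))

lemma diffusionStep_pos (hA : A ∈ colStochastic ℝ ι) (hγ : ∀ l, γ l ∈ Set.Icc (0 : ℝ) 1)
    (hπ : ∀ l, π l ∈ stdSimplex ℝ Θ) (hℓ : ∀ l θ, 0 < ℓ l θ) {l k : ι} {θ : Θ}
    (hlk : 0 < A l k) (hθ : 0 < π l θ) : 0 < diffusionStep A γ ℓ π k θ :=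
  sum_pos' (fun m _ => mul_nonneg (hA.1 m k)
      ((selfAwareUpdate_mem_stdSimplex (hγ m) (hπ m) (hℓ m)).1 θ))
    ⟨l, mem_univ l, mul_pos hlk (selfAwareUpdate_pos (hγ l) (hπ l) (hℓ l) hθ)⟩

lemma sum_mul_le_log_diffusionStep (hA : A ∈ colStochastic ℝ ι)
    (hγ : ∀ l, γ l ∈ Set.Icc (0 : ℝ) 1) (hπ : ∀ l, π l ∈ stdSimplex ℝ Θ)
    (hℓ : ∀ l θ, 0 < ℓ l θ) {θ : Θ} (hθ : ∀ l, 0 < π l θ) (k : ι) :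
    ∑ l, A l k * (Real.log (π l θ) + γ l * Real.log (ℓ l θ / ∑ θ', π l θ' * ℓ l θ')) ≤
      Real.log (diffusionStep A γ ℓ π k θ) := by
  have hψ := fun l => selfAwareUpdate_pos (hγ l) (hπ l) (hℓ l) (hθ l)
  calc _ ≤ ∑ l, A l k * Real.log (selfAwareUpdate (γ l) (π l) (ℓ l) θ) :=
        sum_le_sum fun l _ => mul_le_mul_of_nonneg_left
          (log_add_mul_log_le_log_selfAwareUpdate (hγ l) (hπ l) (hℓ l) (hθ l)) (hA.1 l k)
    _ ≤ Real.log (diffusionStep A γ ℓ π k θ) :=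
        strictConcaveOn_log_Ioi.concaveOn.le_map_sum (fun l _ => hA.1 l k)
          (sum_col_of_mem_colStochastic hA k) (fun l _ => hψ l)

lemma sum_mul_log_add_le_sum_mul_log_diffusionStep (hA : A ∈ colStochastic ℝ ι)
    {v : ι → ℝ} (hv : ∀ l, 0 ≤ v l) (hAv : A *ᵥ v = v)
    (hγ : ∀ l, γ l ∈ Set.Icc (0 : ℝ) 1) (hπ : ∀ l, π l ∈ stdSimplex ℝ Θ)
    (hℓ : ∀ l θ, 0 < ℓ l θ) {θ : Θ} (hθ : ∀ l, 0 < π l θ) :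
    ∑ l, v l * Real.log (π l θ) + ∑ l, v l * (γ l * Real.log (ℓ l θ / ∑ θ', π l θ' * ℓ l θ')) ≤
      ∑ k, v k * Real.log (diffusionStep A γ ℓ π k θ) := by
  set w : ι → ℝ := fun l => Real.log (π l θ) + γ l * Real.log (ℓ l θ / ∑ θ', π l θ' * ℓ l θ')
  calc _ = w ⬝ᵥ (A *ᵥ v) := by
        rw [hAv, ← sum_add_distrib]
        exact sum_congr rfl fun l _ => by simp only [w]; ring
    _ = ∑ k, v k * ∑ l, A l k * w l := by
        rw [dotProduct_mulVec]
        simp only [dotProduct, vecMul, mul_comm (v _)]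
        exact sum_congr rfl fun k _ => by simp only [mul_comm (w _)]
    _ ≤ _ := sum_le_sum fun k _ => mul_le_mul_of_nonneg_left
        (sum_mul_le_log_diffusionStep hA hγ hπ hℓ hθ k) (hv k)

end DiffusionStep

section Diffusion

variable {ι Θ : Type*} [Fintype ι] [DecidableEq ι] [Fintype Θ] {A : Matrix ι ι ℝ}
  {γ : ι → ℕ → ℝ} {ℓ π : ℕ → ι → Θ → ℝ}

/-- `π i l` is agent `l`'s belief at time `i`; `ℓ i l` and `γ l i` are the likelihood of the
signal and the weight it uses to form `π (i + 1)` (the paper's time `i + 1`). -/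
def IsSelfAwareDiffusion (A : Matrix ι ι ℝ) (γ : ι → ℕ → ℝ) (ℓ π : ℕ → ι → Θ → ℝ) : Prop :=
  ∀ i, π (i + 1) = diffusionStep A (fun l => γ l i) (ℓ i) (π i)

namespace IsSelfAwareDiffusion

variable (hπ : IsSelfAwareDiffusion A γ ℓ π) (hA : A ∈ colStochastic ℝ ι)
  (hγ : ∀ l i, γ l i ∈ Set.Icc (0 : ℝ) 1) (hℓ : ∀ i l θ, 0 < ℓ i l θ)
  (h0 : ∀ l, π 0 l ∈ stdSimplex ℝ Θ)
include hπ hA hγ hℓ h0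

lemma mem_stdSimplex (i : ℕ) (l : ι) : π i l ∈ stdSimplex ℝ Θ := by
  induction i generalizing l with
  | zero => exact h0 l
  | succ i ih =>
    rw [hπ i]
    exact diffusionStep_mem_stdSimplex hA (fun l => hγ l i) ih (hℓ i) l

lemma pos_of_pow_pos {i j : ℕ} {l k : ι} {θ : Θ} (hθ : 0 < π i l θ) (hlk : 0 < (A ^ j) l k) :
    0 < π (i + j) k θ := by
  induction j generalizing k with
  | zero =>
    obtain rfl : l = k := by by_contra h; simp [one_apply_ne h] at hlk
    exact hθ
  | succ j ih =>
    rw [pow_succ, mul_apply] at hlk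
    obtain ⟨m, -, hm⟩ :=
      exists_lt_of_sum_lt (s := univ) (f := fun _ => (0 : ℝ)) (by simpa using hlk)
    obtain ⟨hAj, hAmk⟩ := (pos_and_pos_or_neg_and_neg_of_mul_pos hm).resolve_right
      fun h => ((pow_mem hA j).1 l m).not_gt h.1
    rw [← add_assoc, hπ]
    exact diffusionStep_pos hA (fun l => hγ l _) (hπ.mem_stdSimplex hA hγ hℓ h0 _) (hℓ _)
      hAmk (ih hAj)

lemma sum_range_sum_mul_log_ratio_le {v : ι → ℝ} (hv : ∀ l, 0 ≤ v l) (hAv : A *ᵥ v = v)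
    {θ : Θ} (hpos : ∀ i l, 0 < π i l θ) (J : ℕ) :
    ∑ i ∈ range J, ∑ l, v l * (γ l i * Real.log (ℓ i l θ / ∑ θ', π i l θ' * ℓ i l θ')) ≤
      -∑ l, v l * Real.log (π 0 l θ) := by
  set S : ℕ → ℝ := fun i => ∑ l, v l * Real.log (π i l θ)
  have htel : ∀ J, S 0 + ∑ i ∈ range J,
      ∑ l, v l * (γ l i * Real.log (ℓ i l θ / ∑ θ', π i l θ' * ℓ i l θ')) ≤ S J := by
    intro J
    induction J with
    | zero => simp
    | succ J ih =>
      rw [sum_range_succ, ← add_assoc]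
      refine (add_le_add_left ih _).trans ?_
      simp only [S, hπ J]
      exact sum_mul_log_add_le_sum_mul_log_diffusionStep hA hv hAv (fun l => hγ l J)
        (hπ.mem_stdSimplex hA hγ hℓ h0 J) (hℓ J) (hpos J)
  have hS : S J ≤ 0 := sum_nonpos fun l _ => by
    have h := mem_Icc_of_mem_stdSimplex (hπ.mem_stdSimplex hA hγ hℓ h0 J l) θ
    exact mul_nonpos_of_nonneg_of_nonpos (hv l) (Real.log_nonpos h.1 h.2)
  linarith [htel J]

end IsSelfAwareDiffusion

end Diffusion

section Probability

variable {Ω : Type*} [MeasurableSpace Ω] {P : Measure Ω}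

lemma ProbabilityTheory.IndepFun.integral_comp_eq_integral_sum [IsFiniteMeasure P]
    {α β : Type*} [Fintype α] [MeasurableSpace α] [MeasurableSingletonClass α] [Finite β]
    [MeasurableSpace β] [MeasurableSingletonClass β] {X : Ω → α} {Y : Ω → β} (hXY : IndepFun X Y P)
    (hX : Measurable X) (hY : Measurable Y) (f : α → β → ℝ) :
    ∫ ω, f (X ω) (Y ω) ∂P = ∫ ω, ∑ a, P.real (X ⁻¹' {a}) * f a (Y ω) ∂P := by
  have hmap := (indepFun_iff_map_prod_eq_prod_map_map hX.aemeasurable hY.aemeasurable).1 hXY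
  calc ∫ ω, f (X ω) (Y ω) ∂P = ∫ z, Function.uncurry f z ∂(P.map fun ω => (X ω, Y ω)) :=
        (integral_map (f := Function.uncurry f) (hX.prodMk hY).aemeasurable
          (measurable_of_finite _).aestronglyMeasurable).symm
    _ = ∫ b, ∫ a, f a b ∂(P.map X) ∂(P.map Y) := by
        rw [hmap, integral_prod_symm _ Integrable.of_finite]; rfl
    _ = ∫ b, ∑ a, P.real (X ⁻¹' {a}) * f a b ∂(P.map Y) := by
        refine integral_congr_ae (ae_of_all _ fun b => ?_)
        simp only [integral_fintype Integrable.of_finite, smul_eq_mul,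
          map_measureReal_apply hX (measurableSet_singleton _)]
    _ = _ := integral_map hY.aemeasurable (measurable_of_finite _).aestronglyMeasurable

lemma ProbabilityTheory.IndepFun.integral_log_div_eq_integral_relEntropy [IsFiniteMeasure P]
    {α β : Type*} [Fintype α] [MeasurableSpace α] [MeasurableSingletonClass α] [Finite β]
    [MeasurableSpace β] [MeasurableSingletonClass β] {X : Ω → α} {Y : Ω → β}
    (hXY : IndepFun X Y P) (hX : Measurable X) (hY : Measurable Y)
    {p : α → ℝ} (hp : ∀ a, P.real (X ⁻¹' {a}) = p a) (q : β → α → ℝ) :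
    ∫ ω, Real.log (p (X ω) / q (Y ω) (X ω)) ∂P = ∫ ω, relEntropy p (q (Y ω)) ∂P := by
  simp only [hXY.integral_comp_eq_integral_sum hX hY (fun a b => Real.log (p a / q b a)), hp,
    relEntropy]

lemma ae_tendsto_zero_of_sum_integral_le {G : ℕ → Ω → ℝ} (hG : ∀ i, Integrable (G i) P)
    (hG0 : ∀ i ω, 0 ≤ G i ω) {C : ℝ} (hC : ∀ J, ∑ i ∈ range J, ∫ ω, G i ω ∂P ≤ C) :
    ∀ᵐ ω ∂P, Tendsto (fun i => G i ω) atTop (𝓝 0) := by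
  have hmeas := fun i => (hG i).1.aemeasurable.ennreal_ofReal
  have hlint : ∫⁻ ω, ∑' i, ENNReal.ofReal (G i ω) ∂P ≤ ENNReal.ofReal C := by
    simp_rw [lintegral_tsum hmeas, ← ofReal_integral_eq_lintegral_ofReal (hG _)
      (ae_of_all _ (hG0 _))]
    refine ENNReal.tsum_le_of_sum_range_le fun J => ?_
    rw [← ENNReal.ofReal_sum_of_nonneg fun i _ => integral_nonneg (hG0 i)]
    exact ENNReal.ofReal_le_ofReal (hC J)
  filter_upwards [ae_lt_top' (AEMeasurable.tsum hmeas)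
    (ne_top_of_le_ne_top ENNReal.ofReal_ne_top hlint)] with ω hω
  have := (ENNReal.tendsto_toReal ENNReal.zero_ne_top).comp
    (ENNReal.tendsto_atTop_zero_of_tsum_ne_top hω.ne)
  simpa [Function.comp_def, ENNReal.toReal_ofReal (hG0 _ ω)] using this

end Probability

section History

variable {Ω ι : Type*} {Z : ι → Type*}

def history (ξ : (k : ι) → ℕ → Ω → Z k) (i : ℕ) (ω : Ω) : (p : ι × Fin i) → Z p.1 :=
  fun p => ξ p.1 p.2 ω

variable {ξ : (k : ι) → ℕ → Ω → Z k}

lemma exists_eq_comp_history {β : Type*} {u : ℕ → Ω → β} {u₀ : β}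
    (step : ℕ → β → ((k : ι) → Z k) → β) (h0 : ∀ ω, u 0 ω = u₀)
    (hu : ∀ i ω, u (i + 1) ω = step i (u i ω) fun k => ξ k i ω) (i : ℕ) :
    ∃ F : ((p : ι × Fin i) → Z p.1) → β, ∀ ω, u i ω = F (history ξ i ω) := by
  induction i with
  | zero => exact ⟨fun _ => u₀, h0⟩
  | succ i ih =>
    obtain ⟨F, hF⟩ := ih
    exact ⟨fun h => step i (F fun p => h (p.1, p.2.castSucc)) fun k => h (k, Fin.last i),
      fun ω => by rw [hu, hF]; rfl⟩

variable [MeasurableSpace Ω] [∀ k, MeasurableSpace (Z k)]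

lemma measurable_history (hξ : ∀ k i, Measurable (ξ k i)) (i : ℕ) :
    Measurable (history ξ i) :=
  measurable_pi_lambda _ fun p => hξ p.1 p.2

lemma indepFun_history [Fintype ι] {P : Measure Ω} (hξ : ∀ k i, Measurable (ξ k i))
    (hindep : iIndepFun (m := fun p : ι × ℕ => (inferInstance : MeasurableSpace (Z p.1)))
      (fun p : ι × ℕ => ξ p.1 p.2) P) (k : ι) (i : ℕ) :
    IndepFun (ξ k i) (history ξ i) P := by
  have hdisj : Disjoint {(k, i)} (univ ×ˢ range i) := by simp
  have hφ : Measurable fun g : (p : ({(k, i)} : Finset (ι × ℕ))) → Z (p : ι × ℕ).1 =>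
      g ⟨(k, i), mem_singleton_self _⟩ := measurable_pi_apply _
  have hψ : Measurable fun (g : (p : (univ ×ˢ range i : Finset (ι × ℕ))) → Z (p : ι × ℕ).1)
      (p : ι × Fin i) => g ⟨(p.1, p.2), by simp⟩ :=
    measurable_pi_lambda _ fun p => measurable_pi_apply _
  exact (hindep.indepFun_finset _ _ hdisj fun p => hξ p.1 p.2).comp hφ hψ

end History

section SignalModel

variable {Ω ι Θ : Type*} [MeasurableSpace Ω] {P : Measure Ω} [Fintype ι] [Fintype Θ]
  {Z : ι → Type*} [∀ k, Fintype (Z k)] [∀ k, MeasurableSpace (Z k)]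
  [∀ k, MeasurableSingletonClass (Z k)] {L : (k : ι) → Θ → Z k → ℝ} {θ₀ : Θ}

lemma integral_sum_mul_log_div_forecast [IsFiniteMeasure P] {ξ : (k : ι) → Ω → Z k}
    (hξ : ∀ k, Measurable (ξ k)) (hlaw : ∀ k ζ, P.real (ξ k ⁻¹' {ζ}) = L k θ₀ ζ)
    {β : Type*} [Finite β] [MeasurableSpace β] [MeasurableSingletonClass β] {Y : Ω → β}
    (hY : Measurable Y) (hindep : ∀ k, IndepFun (ξ k) Y P) (F : β → ι → Θ → ℝ) (c : ι → ℝ) :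
    ∫ ω, ∑ l, c l * Real.log (L l θ₀ (ξ l ω) / forecast (F (Y ω) l) (L l) (ξ l ω)) ∂P =
      ∫ ω, ∑ l, c l * relEntropy (L l θ₀) (forecast (F (Y ω) l) (L l)) ∂P := by
  rw [integral_finsetSum _ fun l _ => ?_, integral_finsetSum _ fun l _ => ?_]
  · refine sum_congr rfl fun l _ => ?_
    simp only [integral_const_mul, (hindep l).integral_log_div_eq_integral_relEntropy (hξ l) hY
      (hlaw l) fun y => forecast (F y l) (L l)]
  · exact Integrable.of_finite.comp_measurable (μ := P) hY
      (g := fun y => c l * relEntropy (L l θ₀) (forecast (F y l) (L l)))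
  · exact Integrable.of_finite.comp_measurable (μ := P) ((hξ l).prodMk hY)
      (g := fun z => c l * Real.log (L l θ₀ z.1 / forecast (F z.2 l) (L l) z.1))

theorem ae_tendsto_mul_relEntropy_forecast_zero [IsProbabilityMeasure P] [DecidableEq ι]
    {A : Matrix ι ι ℝ} (hA : A ∈ colStochastic ℝ ι) {v : ι → ℝ} (hv : ∀ l, 0 < v l)
    (hAv : A *ᵥ v = v) {γ : ι → ℕ → ℝ} (hγ : ∀ l i, γ l i ∈ Set.Icc (0 : ℝ) 1)
    (hLpos : ∀ k θ ζ, 0 < L k θ ζ) (hLsum : ∀ k θ, ∑ ζ, L k θ ζ = 1)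
    {ξ : (k : ι) → ℕ → Ω → Z k} (hξ : ∀ k i, Measurable (ξ k i))
    (hlaw : ∀ k i ζ, P.real (ξ k i ⁻¹' {ζ}) = L k θ₀ ζ)
    {β : ℕ → Type*} [∀ i, Finite (β i)] [∀ i, MeasurableSpace (β i)]
    [∀ i, MeasurableSingletonClass (β i)] {Y : (i : ℕ) → Ω → β i} (hY : ∀ i, Measurable (Y i))
    (hindep : ∀ k i, IndepFun (ξ k i) (Y i) P)
    {μ : ℕ → Ω → ι → Θ → ℝ} (hμY : ∀ i, ∃ F : β i → ι → Θ → ℝ, ∀ ω, μ i ω = F (Y i ω))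
    (hμ : ∀ ω, IsSelfAwareDiffusion A γ (fun i l θ => L l θ (ξ l i ω)) (fun i => μ i ω))
    (h0 : ∀ ω l, μ 0 ω l ∈ stdSimplex ℝ Θ) (hpos : ∀ i ω l, 0 < μ i ω l θ₀) :
    ∀ᵐ ω ∂P, ∀ k, Tendsto (fun i => γ k i * relEntropy (L k θ₀) (forecast (μ i ω k) (L k)))
      atTop (𝓝 0) := by
  choose F hF using hμY
  have hsimplex := fun ω => (hμ ω).mem_stdSimplex hA hγ (fun i l θ => hLpos l θ _) (h0 ω)
  have hterm : ∀ i ω l, 0 ≤ v l * (γ l i * relEntropy (L l θ₀) (forecast (μ i ω l) (L l))) :=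
    fun i ω l => mul_nonneg (hv l).le <| mul_nonneg (hγ l i).1 <|
      relEntropy_nonneg (hLpos l θ₀) (forecast_pos (hsimplex ω i l) (hLpos l))
        (by rw [sum_forecast (hsimplex ω i l) (hLsum l), hLsum])
  set G : ℕ → Ω → ℝ :=
    fun i ω => ∑ l, v l * (γ l i * relEntropy (L l θ₀) (forecast (μ i ω l) (L l)))
  set X : ℕ → Ω → ℝ := fun i ω => ∑ l, v l * (γ l i *
    Real.log (L l θ₀ (ξ l i ω) / forecast (μ i ω l) (L l) (ξ l i ω)))
  -- all of these are functions of finitely many finite-valued signals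
  have hXint : ∀ i, Integrable (X i) P := fun i => integrable_finsetSum _ fun l _ => by
    simp only [hF]
    exact Integrable.of_finite.comp_measurable (μ := P) ((hξ l i).prodMk (hY i))
      (g := fun z => v l * (γ l i * Real.log (L l θ₀ z.1 / forecast (F i z.2 l) (L l) z.1)))
  have hGint : ∀ i, Integrable (G i) P := fun i => by
    simp only [G, hF]
    exact Integrable.of_finite.comp_measurable (μ := P) (hY i)
      (g := fun y => ∑ l, v l * (γ l i * relEntropy (L l θ₀) (forecast (F i y l) (L l))))
  have hS₀ : Integrable (fun ω => -∑ l, v l * Real.log (μ 0 ω l θ₀)) P := by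
    simp only [hF]
    exact Integrable.of_finite.comp_measurable (μ := P) (hY 0)
      (g := fun y => -∑ l, v l * Real.log (F 0 y l θ₀))
  have hXG : ∀ i, ∫ ω, X i ω ∂P = ∫ ω, G i ω ∂P := fun i => by
    simpa only [X, G, hF, mul_assoc] using integral_sum_mul_log_div_forecast (hξ · i) (hlaw · i)
      (hY i) (hindep · i) (F i) fun l => v l * γ l i
  have hXS : ∀ J ω, ∑ i ∈ range J, X i ω ≤ -∑ l, v l * Real.log (μ 0 ω l θ₀) := fun J ω =>
    (hμ ω).sum_range_sum_mul_log_ratio_le hA hγ (fun i l θ => hLpos l θ _) (h0 ω)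
      (fun l => (hv l).le) hAv (fun i l => hpos i ω l) J
  have hG := ae_tendsto_zero_of_sum_integral_le hGint (fun i ω => sum_nonneg fun l _ =>
    hterm i ω l) fun J => calc
      ∑ i ∈ range J, ∫ ω, G i ω ∂P = ∫ ω, ∑ i ∈ range J, X i ω ∂P := by
        rw [integral_finsetSum _ fun i _ => hXint i]
        exact sum_congr rfl fun i _ => (hXG i).symm
      _ ≤ _ := integral_mono (integrable_finsetSum _ fun i _ => hXint i) hS₀ (hXS J)
  filter_upwards [hG] with ω hω k
  have hle : ∀ i, v k * (γ k i * relEntropy (L k θ₀) (forecast (μ i ω k) (L k))) ≤ G i ω :=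
    fun i => single_le_sum (fun l _ => hterm i ω l) (mem_univ k)
  simpa [(hv k).ne'] using (squeeze_zero (hterm · ω k) hle hω).const_mul (v k)⁻¹

end SignalModel

/-- Self-aware diffusion social learning over a strongly-connected network:
`ψ_{k,i}(θ) = (1−γ_{k,i}) μ_{k,i−1}(θ) + γ_{k,i} · Bayes update`, followed by combination.
If at least one agent has positive prior at the true state `θ0` and
`liminf_i γ_{k,i} > 0` for every agent `k`, then every agent develops correct forecasting:
`m_{k,i}(ζ) = ∑_θ μ_{k,i}(θ) L_k(ζ|θ) → L_k(ζ|θ0)` almost surely.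
(Here `ξ k i` and `γ k i` refer to time `i+1` of the paper's indexing.) -/
theorem stmt_9
    {Ω : Type} [MeasurableSpace Ω] (P : Measure Ω) [IsProbabilityMeasure P]
    {N : ℕ}
    (a : Fin N → Fin N → ℝ)
    (ha0 : ∀ l k, 0 ≤ a l k)
    (ha1 : ∀ k, ∑ l, a l k = 1)
    (haprim : ∃ n : ℕ, ∀ l k, 0 < ((Matrix.of a) ^ n) l k)
    {Θ : Type} [Fintype Θ] (θ0 : Θ)
    (Z : Fin N → Type) [∀ k, Fintype (Z k)] [∀ k, MeasurableSpace (Z k)]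
    [∀ k, MeasurableSingletonClass (Z k)]
    (L : (k : Fin N) → Θ → Z k → ℝ)
    (hLpos : ∀ k θ ζ, 0 < L k θ ζ)
    (hLsum : ∀ k θ, ∑ ζ, L k θ ζ = 1)
    (ξ : (k : Fin N) → ℕ → Ω → Z k)
    (hmeas : ∀ k i, Measurable (ξ k i))
    (hindep : iIndepFun (m := fun p : Fin N × ℕ => (inferInstance : MeasurableSpace (Z p.1)))
      (fun p : Fin N × ℕ => ξ p.1 p.2) P)
    (hlaw : ∀ (k : Fin N) (i : ℕ) (ζ : Z k),
      P (ξ k i ⁻¹' {ζ}) = ENNReal.ofReal (L k θ0 ζ))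
    (γ : Fin N → ℕ → ℝ)
    (hγ01 : ∀ k i, γ k i ∈ Set.Icc (0 : ℝ) 1)
    (hγliminf : ∀ k, 0 < liminf (fun i => γ k i) atTop)
    (μ0 : Fin N → Θ → ℝ)
    (hμ0nn : ∀ k θ, 0 ≤ μ0 k θ) (hμ0sum : ∀ k, ∑ θ, μ0 k θ = 1)
    (μ ψ : ℕ → Fin N → Θ → Ω → ℝ)
    (hinit : ∀ k θ ω, μ 0 k θ ω = μ0 k θ)
    (hψ : ∀ (i : ℕ) (k : Fin N) (θ : Θ) (ω : Ω), ψ (i + 1) k θ ω =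
      (1 - γ k i) * μ i k θ ω +
        γ k i * (μ i k θ ω * L k θ (ξ k i ω) / ∑ θ' : Θ, μ i k θ' ω * L k θ' (ξ k i ω)))
    (hμ : ∀ (i : ℕ) (k : Fin N) (θ : Θ) (ω : Ω),
      μ (i + 1) k θ ω = ∑ l : Fin N, a l k * ψ (i + 1) l θ ω)
    (hprior : ∃ k, 0 < μ0 k θ0) :
    ∀ (k : Fin N) (ζ : Z k),
      ∀ᵐ ω ∂P, Tendsto (fun i => ∑ θ : Θ, μ i k θ ω * L k θ ζ) atTop
        (nhds (L k θ0 ζ)) := by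
  intro k ζ
  obtain ⟨p, hp⟩ := haprim
  obtain ⟨k₀, hk₀⟩ := hprior
  have hA : Matrix.of a ∈ colStochastic ℝ (Fin N) := mem_colStochastic_iff_sum.2 ⟨ha0, ha1⟩
  have : Nonempty (Fin N) := ⟨k⟩
  obtain ⟨v, hv, hAv⟩ := exists_pos_mulVec_eq_self hA hp
  have hℓ : ∀ ω i l θ, 0 < L l θ (ξ l i ω) := fun ω i l θ => hLpos l θ _
  have hdiff : ∀ ω, IsSelfAwareDiffusion (Matrix.of a) γ (fun i l θ => L l θ (ξ l i ω))
      (fun i l θ => μ i l θ ω) := fun ω i => by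
    ext l θ; simp only [diffusionStep, selfAwareUpdate, hμ, hψ, Matrix.of_apply]
  have h0 : ∀ ω l, (fun θ => μ 0 l θ ω) ∈ stdSimplex ℝ Θ := fun ω l => by
    simpa only [hinit] using ⟨hμ0nn l, hμ0sum l⟩
  have hsimplex := fun ω => (hdiff ω).mem_stdSimplex hA hγ01 (hℓ ω) (h0 ω)
  have hpos : ∀ i ω l, 0 < μ (p + i) l θ0 ω := fun i ω l => by
    simpa using (hdiff ω).pos_of_pow_pos hA hγ01 (hℓ ω) (h0 ω)
      (show 0 < μ 0 k₀ θ0 ω by rwa [hinit]) (pow_pos_of_le hA hp (Nat.le_add_right p i) k₀ l)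
  have hhist := exists_eq_comp_history (u := fun i ω l θ => μ i l θ ω)
    (fun i π s => diffusionStep (Matrix.of a) (γ · i) (fun l θ => L l θ (s l)) π)
    (fun ω => funext₂ fun l θ => hinit l θ ω) (fun i ω => hdiff ω i)
  have hdiss := ae_tendsto_mul_relEntropy_forecast_zero hA hv hAv
    (fun l i => hγ01 l (p + i)) hLpos hLsum (θ₀ := θ0) (fun l i => hmeas l (p + i))
    (fun l i ζ => by rw [measureReal_def, hlaw, ENNReal.toReal_ofReal (hLpos l θ0 ζ).le])
    (fun i => measurable_history hmeas (p + i)) (fun l i => indepFun_history hmeas hindep l (p + i))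
    (fun i => hhist (p + i)) (fun ω i => hdiff ω (p + i)) (fun ω => hsimplex ω p) hpos
  filter_upwards [hdiss] with ω hω
  have hKL := tendsto_zero_of_tendsto_mul_zero_of_liminf_pos (fun i => (hγ01 k i).1) (hγliminf k)
    (x := fun i => relEntropy (L k θ0) (forecast (fun θ => μ i k θ ω) (L k)))
    ((tendsto_add_atTop_iff_nat p).1 (by simpa only [add_comm] using hω k))
  exact tendsto_of_tendsto_relEntropy_zero (hLpos k θ0)
    (fun i => forecast_pos (hsimplex ω i k) (hLpos k))
    (fun i => by rw [sum_forecast (hsimplex ω i k) (hLsum k), hLsum]) hKL ζ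
end

section
/- Let B be an n×n matrix with nonnegative entries and spectral radius ρ(B) < 1, let γ ≥ 0, let (c_i) be a sequence in R^n with c_i → c, and let (x_i) be a sequence of vectors in [0,1]^n satisfying, entrywise for all i ≥ 1, B x_{i−1} + c_i − γ·1 ⪯ x_i ⪯ B x_{i−1} + c_i + γ·1. Then, entrywise, limsup_{i→∞} x_i ⪯ (I − B)^{-1} c + γ (I − B)^{-1} 1 and liminf_{i→∞} x_i ⪰ (I − B)^{-1} c − γ (I − B)^{-1} 1, where 1 is the all-ones vector and limsup/liminf of vector sequences are taken entrywise. -/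
/-! Since every eigenvalue of `B` lies in the open unit disc, Gelfand's formula gives `Bᵏ → 0`,
so `I - B` is invertible. As `B ⪰ 0` acts monotonically, passing to the limit superior in the
upper sandwich gives `L ⪯ B L + c + γ1` for `L = limsup xᵢ`. The fixed point
`u = (I - B)⁻¹ (c + γ1)` satisfies `u = B u + c + γ1`, so `d = L - u` has `d ⪯ B d ⪯ Bᵏ d → 0`,
i.e. `L ⪯ u`. The lower bound is the upper one applied to `-x`. -/

open Filter Matrix Topology

theorem le_of_forall_pos_le_add_smul {E : Type*} [TopologicalSpace E] [AddCommMonoid E]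
    [Module ℝ E] [ContinuousAdd E] [ContinuousSMul ℝ E] [Preorder E] [ClosedIciTopology E]
    {v w e : E} (h : ∀ ε > (0 : ℝ), v ≤ w + ε • e) : v ≤ w := by
  have hcont : Continuous fun ε : ℝ => w + ε • e := by fun_prop
  have hlim : Tendsto (fun ε : ℝ => w + ε • e) (𝓝[>] 0) (𝓝 w) := by
    simpa using (hcont.tendsto 0).mono_left nhdsWithin_le_nhds
  exact ge_of_tendsto hlim (eventually_nhdsWithin_of_forall h)

theorem Real.liminf_eq_neg_limsup_neg {ι : Type*} (l : Filter ι) (u : ι → ℝ) :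
    liminf u l = -limsup (fun i => -u i) l := by
  rw [liminf_eq, limsup_eq, Real.sInf_def, neg_neg]
  congr 1
  ext a
  simp [neg_le]

section BanachAlgebra

variable {A : Type*} [NormedRing A] [NormedAlgebra ℂ A] [CompleteSpace A]

theorem spectrum.spectralRadius_lt_one_of_forall_norm_lt_one {a : A}
    (h : ∀ z ∈ spectrum ℂ a, ‖z‖ < 1) : spectralRadius ℂ a < 1 := by
  rcases (spectrum ℂ a).eq_empty_or_nonempty with hempty | hne
  · simp [spectralRadius, hempty]
  · exact_mod_cast spectrum.spectralRadius_lt_of_forall_lt_of_nonempty hne (r := 1)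
      fun z hz => by simpa [← NNReal.coe_lt_coe] using h z hz

theorem spectrum.tendsto_pow_nhds_zero_of_spectralRadius_lt_one {a : A}
    (h : spectralRadius ℂ a < 1) : Tendsto (a ^ ·) atTop (𝓝 0) := by
  obtain ⟨r, hρr, hr1⟩ := ENNReal.lt_iff_exists_nnreal_btwn.mp h
  have hle : ∀ᶠ k : ℕ in atTop, ‖a ^ k‖ ≤ (r : ℝ) ^ k := by
    filter_upwards [(spectrum.gelfand_formula a).eventually_lt_const hρr,
      eventually_gt_atTop 0] with k hk hk0
    rw [one_div, ENNReal.rpow_inv_lt_iff (by positivity), ENNReal.rpow_natCast] at hk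
    exact_mod_cast hk.le
  exact squeeze_zero_norm' hle
    (tendsto_pow_atTop_nhds_zero_of_lt_one r.2 (by exact_mod_cast hr1))

end BanachAlgebra

namespace Matrix

theorem iterate_mulVec {n R : Type*} [Fintype n] [DecidableEq n] [Semiring R]
    (B : Matrix n n R) (k : ℕ) (v : n → R) : (B *ᵥ ·)^[k] v = (B ^ k) *ᵥ v := by
  induction k with
  | zero => simp
  | succ k ih => rw [Function.iterate_succ_apply', ih, mulVec_mulVec, pow_succ']

theorem mulVec_mono_of_nonneg {n R : Type*} [Fintype n] [Semiring R] [PartialOrder R]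
    [IsOrderedRing R] {B : Matrix n n R} (hB : ∀ i j, 0 ≤ B i j) : Monotone (B *ᵥ ·) :=
  fun _ _ huv i => Finset.sum_le_sum fun j _ => mul_le_mul_of_nonneg_left (huv j) (hB i j)

variable {n : Type*} [Fintype n] {B : Matrix n n ℝ}

theorem limsup_le_mulVec_limsup_add (hB0 : ∀ i j, 0 ≤ B i j) {x c : ℕ → n → ℝ} {cl : n → ℝ}
    (hx : ∀ j, IsBoundedUnder (· ≤ ·) atTop fun i => |x i j|) (hc : Tendsto c atTop (𝓝 cl))
    (hrec : ∀ᶠ i in atTop, x i ≤ B *ᵥ x (i - 1) + c i) :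
    (fun j => limsup (x · j) atTop) ≤ B *ᵥ (fun j => limsup (x · j) atTop) + cl := by
  set L := fun j => limsup (x · j) atTop
  refine le_of_forall_pos_le_add_smul (e := B *ᵥ 1 + 1) fun ε hε j => ?_
  obtain ⟨hxa, hxb⟩ := forall_and.1 fun j => isBoundedUnder_le_abs.1 (hx j)
  have hxL : ∀ᶠ i in atTop, x i ≤ L + ε • 1 := eventually_all.2 fun j =>
    (eventually_lt_of_limsup_lt (lt_add_of_pos_right (L j) hε) (hxa j)).mono fun _ h => by
      simpa using h.le
  have hcl : ∀ᶠ i in atTop, c i ≤ cl + ε • 1 := eventually_all.2 fun j =>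
    ((tendsto_pi_nhds.1 hc j).eventually_lt_const (lt_add_of_pos_right (cl j) hε)).mono
      fun _ h => by simpa using h.le
  have hbound : ∀ᶠ i in atTop, x i j ≤ (B *ᵥ L + cl + ε • (B *ᵥ 1 + 1)) j := by
    filter_upwards [hrec, (tendsto_sub_atTop_nat 1).eventually hxL, hcl] with i hi hxi hci
    calc x i j ≤ (B *ᵥ x (i - 1) + c i) j := hi j
      _ ≤ (B *ᵥ (L + ε • 1) + (cl + ε • 1)) j :=
        add_le_add (mulVec_mono_of_nonneg hB0 hxi j) (hci j)
      _ = (B *ᵥ L + cl + ε • (B *ᵥ 1 + 1)) j := by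
        simp only [mulVec_add, mulVec_smul, Pi.add_apply, Pi.smul_apply, smul_eq_mul]
        ring
  exact limsup_le_of_le (hxb j).isCoboundedUnder_le hbound

variable [DecidableEq n]

theorem tendsto_pow_nhds_zero_of_forall_spectrum_norm_lt_one
    (hB : ∀ z ∈ spectrum ℂ (B.map (Complex.ofReal ·)), ‖z‖ < 1) :
    Tendsto (B ^ ·) atTop (𝓝 0) := by
  let _ := Matrix.linftyOpNormedRing (n := n) (α := ℂ)
  let _ := Matrix.linftyOpNormedAlgebra (n := n) (R := ℂ) (α := ℂ)
  have hA := spectrum.tendsto_pow_nhds_zero_of_spectralRadius_lt_one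
    (spectrum.spectralRadius_lt_one_of_forall_norm_lt_one hB)
  have hre : Continuous fun M : Matrix n n ℂ => M.map Complex.re :=
    continuous_id.matrix_map Complex.continuous_re
  have hpow (k : ℕ) : ((B.map (Complex.ofReal ·)) ^ k).map Complex.re = B ^ k := by
    rw [show B.map (Complex.ofReal ·) = B.map Complex.ofRealHom from rfl,
      ← RingHom.mapMatrix_apply, ← map_pow, RingHom.mapMatrix_apply, Matrix.map_map]
    exact Matrix.map_id' _
  have := (hre.tendsto 0).comp hA
  simp only [Function.comp_def, hpow, Matrix.map_zero, Complex.zero_re] at this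
  exact this

theorem tendsto_pow_mulVec_nhds_zero (hB : Tendsto (B ^ ·) atTop (𝓝 0)) (v : n → ℝ) :
    Tendsto (fun k => (B ^ k) *ᵥ v) atTop (𝓝 0) := by
  have hcont : Continuous fun M : Matrix n n ℝ => M *ᵥ v := by fun_prop
  simpa only [Function.comp_def, zero_mulVec] using (hcont.tendsto 0).comp hB

theorem isUnit_det_one_sub_of_tendsto_pow (hB : Tendsto (B ^ ·) atTop (𝓝 0)) :
    IsUnit (1 - B).det := by
  rw [isUnit_iff_ne_zero, Ne, ← exists_mulVec_eq_zero_iff]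
  rintro ⟨v, hv0, hv⟩
  have hfix : ∀ k, (B ^ k) *ᵥ v = v := by
    rw [sub_mulVec, one_mulVec, sub_eq_zero] at hv
    intro k
    rw [← iterate_mulVec, Function.iterate_fixed hv.symm]
  exact hv0 (tendsto_nhds_unique tendsto_const_nhds
    ((tendsto_pow_mulVec_nhds_zero hB v).congr hfix))

theorem nonpos_of_le_mulVec (hB0 : ∀ i j, 0 ≤ B i j) (hB : Tendsto (B ^ ·) atTop (𝓝 0))
    {d : n → ℝ} (hd : d ≤ B *ᵥ d) : d ≤ 0 :=
  ge_of_tendsto' (tendsto_pow_mulVec_nhds_zero hB d) fun k => by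
    simpa only [Function.iterate_zero_apply, iterate_mulVec] using
      (mulVec_mono_of_nonneg hB0).monotone_iterate_of_le_map hd (Nat.zero_le k)

theorem le_nonsing_inv_mulVec_of_le_mulVec_add (hB0 : ∀ i j, 0 ≤ B i j)
    (hB : Tendsto (B ^ ·) atTop (𝓝 0)) {v w : n → ℝ} (h : v ≤ B *ᵥ v + w) :
    v ≤ (1 - B)⁻¹ *ᵥ w := by
  set u := (1 - B)⁻¹ *ᵥ w
  have hu : u = B *ᵥ u + w := by
    have : (1 - B) *ᵥ u = w := by
      rw [mulVec_mulVec, mul_nonsing_inv _ (isUnit_det_one_sub_of_tendsto_pow hB), one_mulVec]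
    rw [sub_mulVec, one_mulVec] at this
    rw [← this]
    abel
  have hd : v - u ≤ B *ᵥ (v - u) := calc
    v - u ≤ B *ᵥ v + w - u := sub_le_sub_right h u
    _ = B *ᵥ (v - u) := by
      conv_lhs => rw [hu]
      rw [mulVec_sub]
      abel
  exact sub_nonpos.1 (nonpos_of_le_mulVec hB0 hB hd)

theorem limsup_le_nonsing_inv_mulVec (hB0 : ∀ i j, 0 ≤ B i j)
    (hB : Tendsto (B ^ ·) atTop (𝓝 0)) {x c : ℕ → n → ℝ} {cl : n → ℝ}
    (hx : ∀ j, IsBoundedUnder (· ≤ ·) atTop fun i => |x i j|) (hc : Tendsto c atTop (𝓝 cl))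
    (hrec : ∀ᶠ i in atTop, x i ≤ B *ᵥ x (i - 1) + c i) :
    (fun j => limsup (x · j) atTop) ≤ (1 - B)⁻¹ *ᵥ cl :=
  le_nonsing_inv_mulVec_of_le_mulVec_add hB0 hB (limsup_le_mulVec_limsup_add hB0 hx hc hrec)

end Matrix

theorem stmt_13_general {n : ℕ} (B : Matrix (Fin n) (Fin n) ℝ)
    (hB0 : ∀ j l, 0 ≤ B j l)
    (hBspec : ∀ z ∈ spectrum ℂ (B.map (Complex.ofReal ·)), ‖z‖ < 1)
    (γ : ℝ)
    (c : ℕ → Fin n → ℝ) (cl : Fin n → ℝ)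
    (hc : Tendsto c atTop (nhds cl))
    (x : ℕ → Fin n → ℝ) (hx01 : ∀ i j, x i j ∈ Set.Icc (0 : ℝ) 1)
    (hrec : ∀ i : ℕ, 1 ≤ i →
      B.mulVec (x (i - 1)) + c i - γ • (1 : Fin n → ℝ) ≤ x i ∧
      x i ≤ B.mulVec (x (i - 1)) + c i + γ • (1 : Fin n → ℝ)) :
    ∀ j : Fin n,
      limsup (fun i => x i j) atTop ≤
        ((1 - B)⁻¹.mulVec cl) j + γ * ((1 - B)⁻¹.mulVec (1 : Fin n → ℝ)) j ∧
      ((1 - B)⁻¹.mulVec cl) j - γ * ((1 - B)⁻¹.mulVec (1 : Fin n → ℝ)) j ≤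
        liminf (fun i => x i j) atTop := by
  have hpow := tendsto_pow_nhds_zero_of_forall_spectrum_norm_lt_one hBspec
  have hx (j : Fin n) : IsBoundedUnder (· ≤ ·) atTop fun i => |x i j| :=
    isBoundedUnder_of ⟨1, fun i => abs_le.2 ⟨by linarith [(hx01 i j).1], (hx01 i j).2⟩⟩
  have hupper := limsup_le_nonsing_inv_mulVec hB0 hpow hx (hc.add_const (γ • 1))
    (eventually_atTop.2 ⟨1, fun i hi => by rw [← add_assoc]; exact (hrec i hi).2⟩)
  have hlower := limsup_le_nonsing_inv_mulVec hB0 hpow (x := -x) (by simpa using hx)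
    (hc.neg.add_const (γ • 1)) (eventually_atTop.2 ⟨1, fun i hi j => by
      have := (hrec i hi).1 j
      simp only [Pi.neg_apply, mulVec_neg, Pi.add_apply, Pi.sub_apply] at this ⊢
      linarith⟩)
  intro j
  have hu := hupper j
  have hl := hlower j
  simp only [mulVec_add, mulVec_neg, mulVec_smul, Pi.add_apply, Pi.neg_apply, Pi.smul_apply,
    smul_eq_mul] at hu hl
  rw [Real.liminf_eq_neg_limsup_neg]
  exact ⟨hu, by linarith⟩

/-- Sandwich recursion `B x_{i-1} + c_i − γ1 ⪯ x_i ⪯ B x_{i-1} + c_i + γ1`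
with `B ⪰ 0`, `ρ(B) < 1`, `x_i ∈ [0,1]^n`, `c_i → c` implies the entrywise bounds
`limsup x ⪯ (I−B)⁻¹ c + γ (I−B)⁻¹ 1` and `liminf x ⪰ (I−B)⁻¹ c − γ (I−B)⁻¹ 1`. -/
theorem stmt_13 {n : ℕ} (B : Matrix (Fin n) (Fin n) ℝ)
    (hB0 : ∀ j l, 0 ≤ B j l)
    (hBspec : ∀ z ∈ spectrum ℂ (B.map (Complex.ofReal ·)), ‖z‖ < 1)
    (γ : ℝ) (hγ : 0 ≤ γ)
    (c : ℕ → Fin n → ℝ) (cl : Fin n → ℝ)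
    (hc : Tendsto c atTop (nhds cl))
    (x : ℕ → Fin n → ℝ) (hx01 : ∀ i j, x i j ∈ Set.Icc (0 : ℝ) 1)
    (hrec : ∀ i : ℕ, 1 ≤ i →
      B.mulVec (x (i - 1)) + c i - γ • (1 : Fin n → ℝ) ≤ x i ∧
      x i ≤ B.mulVec (x (i - 1)) + c i + γ • (1 : Fin n → ℝ)) :
    ∀ j : Fin n,
      limsup (fun i => x i j) atTop ≤
        ((1 - B)⁻¹.mulVec cl) j + γ * ((1 - B)⁻¹.mulVec (1 : Fin n → ℝ)) j ∧
      ((1 - B)⁻¹.mulVec cl) j - γ * ((1 - B)⁻¹.mulVec (1 : Fin n → ℝ)) j ≤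
        liminf (fun i => x i j) atTop :=
  stmt_13_general B hB0 hBspec γ c cl hc x hx01 hrec
end

section
/- Let B be an n×n matrix with nonnegative entries and spectral radius ρ(B) < 1, let (e_i) be a sequence in R^n with e_i → 0, and let (x_i) be a sequence in R^n such that for all sufficiently large i, 0 ⪯ x_i ⪯ B x_{i−1} + e_i entrywise. Then x_i → 0. -/
open Filter Matrix
open scoped NNReal ENNReal

section Aux

attribute [local instance] Matrix.linftyOpNormedRing Matrix.linftyOpNormedAlgebra

private lemma stmt14_pow_nonneg {n : ℕ} (B : Matrix (Fin n) (Fin n) ℝ)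
    (hB0 : ∀ j l, 0 ≤ B j l) : ∀ k j l, 0 ≤ (B ^ k) j l := by
  intro k
  induction k with
  | zero => intro j l; by_cases h : j = l <;> simp [Matrix.one_apply, h]
  | succ k ih =>
    intro j l
    rw [pow_succ, Matrix.mul_apply]
    exact Finset.sum_nonneg fun p _ => mul_nonneg (ih j p) (hB0 p l)

private lemma stmt14_contract {n : ℕ} [Nonempty (Fin n)] (B : Matrix (Fin n) (Fin n) ℝ)
    (hB0 : ∀ j l, 0 ≤ B j l)
    (hBspec : ∀ z ∈ spectrum ℂ (B.map (Complex.ofReal ·)), ‖z‖ < 1) :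
    ∃ m : ℕ, ∃ c : ℝ, 1 ≤ m ∧ 0 ≤ c ∧ c < 1 ∧ ∀ j, ∑ l, (B ^ m) j l ≤ c := by
  set A := B.map (Complex.ofReal ·) with hA
  have hρ : spectralRadius ℂ A < 1 := by
    have := spectrum.spectralRadius_lt_of_forall_lt A (r := 1)
      (fun z hz => by simpa [← NNReal.coe_lt_coe] using hBspec z hz)
    simpa using this
  have hT := spectrum.pow_nnnorm_pow_one_div_tendsto_nhds_spectralRadius A
  have hev : ∀ᶠ k : ℕ in atTop, ((‖A ^ k‖₊ : ENNReal) ^ (1/(k:ℝ))) < 1 :=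
    hT.eventually_lt_const hρ
  obtain ⟨m, hk, hm1⟩ := (hev.and (eventually_ge_atTop 1)).exists
  have hmlt : ‖A ^ m‖ < 1 := by
    by_contra hge
    push_neg at hge
    have h1 : (1 : ENNReal) ≤ (‖A ^ m‖₊ : ENNReal) := by
      exact_mod_cast (by exact_mod_cast hge : (1:ℝ≥0) ≤ ‖A ^ m‖₊)
    have : (1:ENNReal) ≤ (‖A ^ m‖₊ : ENNReal) ^ (1/(m:ℝ)) :=
      ENNReal.one_le_rpow h1 (by positivity)
    exact absurd hk this.not_gt
  have hmap : A ^ m = (B ^ m).map (Complex.ofReal ·) := by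
    have := map_pow (Complex.ofRealHom.mapMatrix) B m
    simp only [RingHom.mapMatrix_apply] at this
    exact this.symm
  refine ⟨m, ‖A ^ m‖, hm1, norm_nonneg _, hmlt, fun j => ?_⟩
  rw [hmap, Matrix.linfty_opNorm_def]
  have hpow0 := stmt14_pow_nonneg B hB0 m
  have h1 : (∑ l, ‖((B ^ m).map (Complex.ofReal ·)) j l‖₊ : ℝ≥0) ≤
      (Finset.univ : Finset (Fin n)).sup
        fun i => ∑ l, ‖((B ^ m).map (Complex.ofReal ·)) i l‖₊ :=
    Finset.le_sup (f := fun i => ∑ l, ‖((B ^ m).map (Complex.ofReal ·)) i l‖₊)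
      (Finset.mem_univ j)
  have h2 : ∑ l, (B ^ m) j l
      = ((∑ l, ‖((B ^ m).map (Complex.ofReal ·)) j l‖₊ : ℝ≥0) : ℝ) := by
    push_cast
    refine Finset.sum_congr rfl fun l _ => ?_
    simp [Matrix.map_apply, Complex.norm_real, abs_of_nonneg (hpow0 j l)]
  rw [h2]
  exact_mod_cast h1

end Aux

set_option maxHeartbeats 1000000 in
/-- If `B ⪰ 0` with `ρ(B) < 1`, `e_i → 0`, and for all sufficiently large `i`
the vectors satisfy `0 ⪯ x_i ⪯ B x_{i-1} + e_i` entrywise, then `x_i → 0`. -/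
theorem stmt_14 {n : ℕ} (B : Matrix (Fin n) (Fin n) ℝ)
    (hB0 : ∀ j l, 0 ≤ B j l)
    (hBspec : ∀ z ∈ spectrum ℂ (B.map (Complex.ofReal ·)), ‖z‖ < 1)
    (e : ℕ → Fin n → ℝ) (he : Tendsto e atTop (nhds 0))
    (x : ℕ → Fin n → ℝ)
    (hrec : ∃ i₀ : ℕ, ∀ i ≥ i₀, 1 ≤ i →
      (0 : Fin n → ℝ) ≤ x i ∧ x i ≤ B.mulVec (x (i - 1)) + e i) :
    Tendsto x atTop (nhds 0) := by
  rcases isEmpty_or_nonempty (Fin n) with hE | hNE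
  · have hx : x = fun _ => 0 := funext fun i => funext fun j => isEmptyElim j
    rw [hx]; exact tendsto_const_nhds
  obtain ⟨m, c, hm1, hc0, hc1, hrow⟩ := stmt14_contract B hB0 hBspec
  have hpow0 := stmt14_pow_nonneg B hB0
  set S : ℕ → Fin n → ℝ := fun t j => ∑ l, (B ^ t) j l with hS
  have hS0 : ∀ t j, 0 ≤ S t j := fun t j =>
    Finset.sum_nonneg fun l _ => hpow0 t j l
  have hSzero : ∀ j, S 0 j = 1 := by
    intro j; simp [hS, Matrix.one_apply]
  set v : Fin n → ℝ := fun j => ∑ t ∈ Finset.range m, S t j with hv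
  have hv1 : ∀ j, 1 ≤ v j := by
    intro j
    have : S 0 j ≤ v j :=
      Finset.single_le_sum (fun t _ => hS0 t j) (Finset.mem_range.mpr (by omega))
    rw [hSzero j] at this; exact this
  have hv0 : ∀ j, 0 < v j := fun j => lt_of_lt_of_le one_pos (hv1 j)
  have hmv : ∀ (w : Fin n → ℝ) j, (B.mulVec w) j = ∑ l, B j l * w l := by
    intro w j; simp [Matrix.mulVec, dotProduct]
  have hBv : ∀ j, (B.mulVec v) j ≤ v j - (1 - c) := by
    intro j
    have key : ∀ t, ∑ l, B j l * S t l = S (t + 1) j := by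
      intro t
      have h : S (t + 1) j = ∑ p, ∑ l, B j l * (B ^ t) l p := by
        simp [hS, pow_succ', Matrix.mul_apply]
      rw [h]
      simp only [hS, Finset.mul_sum]
      rw [Finset.sum_comm]
    have hcomp : (B.mulVec v) j = ∑ t ∈ Finset.range m, S (t + 1) j := by
      rw [hmv]
      simp only [hv, Finset.mul_sum]
      rw [Finset.sum_comm]
      exact Finset.sum_congr rfl fun t _ => key t
    have hshift : ∑ t ∈ Finset.range m, S (t + 1) j = v j + S m j - 1 := by
      have h1 : ∑ t ∈ Finset.range (m + 1), S t j
          = (∑ t ∈ Finset.range m, S (t + 1) j) + S 0 j := Finset.sum_range_succ' _ _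
      have h2 : ∑ t ∈ Finset.range (m + 1), S t j
          = (∑ t ∈ Finset.range m, S t j) + S m j := Finset.sum_range_succ _ _
      rw [hSzero j] at h1
      simp only [hv]
      linarith
    have hSm : S m j ≤ c := hrow j
    rw [hcomp, hshift]
    linarith
  set V : ℝ := ∑ j, v j with hV
  have hVj : ∀ j, v j ≤ V :=
    fun j => Finset.single_le_sum (fun l _ => (hv0 l).le) (Finset.mem_univ j)
  have hV1 : 1 ≤ V := by
    obtain ⟨j⟩ := hNE
    exact le_trans (hv1 j) (hVj j)
  have hV0 : 0 < V := lt_of_lt_of_le one_pos hV1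
  set c' : ℝ := 1 - (1 - c) / V with hc'
  have hc'0 : 0 ≤ c' := by
    have : (1 - c) / V ≤ 1 := by
      rw [div_le_one hV0]; linarith
    simp only [hc']; linarith
  have hc'1 : c' < 1 := by
    have : 0 < (1 - c) / V := div_pos (by linarith) hV0
    simp only [hc']; linarith
  have hBv' : ∀ j, (B.mulVec v) j ≤ c' * v j := by
    intro j
    have h1 : (1 - c) / V * v j ≤ 1 - c := by
      rw [div_mul_eq_mul_div, div_le_iff₀ hV0]
      nlinarith [hVj j, hv0 j]
    have h2 := hBv j
    simp only [hc']
    nlinarith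
  obtain ⟨i₀, hrec⟩ := hrec
  have hstep : ∀ i, i₀ ≤ i →
      (∀ j, 0 ≤ x (i + 1) j) ∧ (∀ j, x (i + 1) j ≤ (B.mulVec (x i)) j + e (i + 1) j) := by
    intro i hi
    obtain ⟨h1, h2⟩ := hrec (i + 1) (by omega) (by omega)
    simp only [Nat.add_sub_cancel] at h2
    exact ⟨fun j => h1 j, fun j => h2 j⟩
  have hx0 : ∀ i, i₀ + 1 ≤ i → ∀ j, 0 ≤ x i j := by
    intro i hi j
    obtain ⟨k, rfl⟩ : ∃ k, i = k + 1 := ⟨i - 1, by omega⟩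
    exact (hstep k (by omega)).1 j
  have heN : Tendsto (fun i => ‖e i‖) atTop (nhds 0) := by
    simpa using he.norm
  have claim : ∀ ε > (0 : ℝ), ∀ᶠ i in atTop, ∀ j, x i j ≤ ε * v j := by
    intro ε hε
    set δ : ℝ := (1 - c') * (ε / 2) with hδ
    have hδ0 : 0 < δ := mul_pos (by linarith) (by linarith)
    obtain ⟨i₂, hi₂⟩ := Metric.tendsto_atTop.mp heN δ hδ0
    have he_small : ∀ i, i₂ ≤ i → ∀ j, e i j ≤ δ := by
      intro i hi j
      have h2 := hi₂ i hi
      rw [Real.dist_eq, sub_zero, abs_of_nonneg (norm_nonneg _)] at h2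
      calc e i j ≤ |e i j| := le_abs_self _
        _ = ‖e i j‖ := (Real.norm_eq_abs _).symm
        _ ≤ ‖e i‖ := norm_le_pi_norm (e i) j
        _ ≤ δ := h2.le
    set N : ℕ := max (i₀ + 1) i₂ with hN
    set M : ℝ := ∑ j, x N j with hM
    have hxN0 : ∀ j, 0 ≤ x N j := hx0 N (le_max_left _ _)
    have hM0 : 0 ≤ M := Finset.sum_nonneg fun j _ => hxN0 j
    have hMb : ∀ j, x N j ≤ M * v j := by
      intro j
      have h1 : x N j ≤ M := Finset.single_le_sum (fun l _ => hxN0 l) (Finset.mem_univ j)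
      nlinarith [hv1 j]
    have hind : ∀ k, ∀ j, x (N + k) j ≤ (c' ^ k * M + ε / 2) * v j := by
      intro k
      induction k with
      | zero =>
        intro j
        simp only [Nat.add_zero, pow_zero, one_mul]
        nlinarith [hMb j, hv0 j]
      | succ k ih =>
        intro j
        have hNk : i₀ ≤ N + k := by omega
        have hub := (hstep (N + k) hNk).2 j
        have hBx : (B.mulVec (x (N + k))) j ≤ (c' ^ k * M + ε / 2) * (B.mulVec v) j := by
          rw [hmv, hmv, Finset.mul_sum]
          refine Finset.sum_le_sum fun l _ => ?_
          have := mul_le_mul_of_nonneg_left (ih l) (hB0 j l)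
          calc B j l * x (N + k) l ≤ B j l * ((c' ^ k * M + ε / 2) * v l) := this
            _ = (c' ^ k * M + ε / 2) * (B j l * v l) := by ring
        have hBv'' : (c' ^ k * M + ε / 2) * (B.mulVec v) j
            ≤ (c' ^ k * M + ε / 2) * (c' * v j) := by
          have hf0 : 0 ≤ c' ^ k * M + ε / 2 := by positivity
          exact mul_le_mul_of_nonneg_left (hBv' j) hf0
        have heb : e (N + k + 1) j ≤ δ * v j := by
          have h1 : e (N + k + 1) j ≤ δ := he_small _ (by omega) j
          nlinarith [hv1 j, hδ0]
        have hmain : x (N + (k + 1)) j ≤ (c' ^ k * M + ε / 2) * (c' * v j) + δ * v j := by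
          calc x (N + (k + 1)) j = x (N + k + 1) j := rfl
            _ ≤ (B.mulVec (x (N + k))) j + e (N + k + 1) j := hub
            _ ≤ (c' ^ k * M + ε / 2) * (c' * v j) + δ * v j :=
                add_le_add (le_trans hBx hBv'') heb
        calc x (N + (k + 1)) j
            ≤ (c' ^ k * M + ε / 2) * (c' * v j) + δ * v j := hmain
          _ ≤ (c' ^ (k + 1) * M + ε / 2) * v j := by
              rw [pow_succ]
              simp only [hδ]
              nlinarith [hv0 j]
    have hpow_tendsto : Tendsto (fun k => c' ^ k * M) atTop (nhds 0) := by
      have := tendsto_pow_atTop_nhds_zero_of_lt_one hc'0 hc'1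
      simpa using this.mul_const M
    obtain ⟨k₀, hk₀⟩ := Metric.tendsto_atTop.mp hpow_tendsto (ε / 2) (by linarith)
    refine eventually_atTop.mpr ⟨N + k₀, fun i hi j => ?_⟩
    obtain ⟨k, rfl⟩ : ∃ k, i = N + k := ⟨i - N, by omega⟩
    have hkk : k₀ ≤ k := by omega
    have h1 := hind k j
    have h2 : c' ^ k ≤ c' ^ k₀ := pow_le_pow_of_le_one hc'0 hc'1.le hkk
    have h3 := hk₀ k₀ le_rfl
    rw [Real.dist_eq, sub_zero] at h3
    have h4 : c' ^ k₀ * M ≤ ε / 2 := (lt_of_abs_lt h3).le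
    have h5 : c' ^ k * M ≤ ε / 2 :=
      le_trans (mul_le_mul_of_nonneg_right h2 hM0) h4
    nlinarith [hv0 j]
  rw [NormedAddCommGroup.tendsto_nhds_zero]
  intro ε hε
  have h2V : (0:ℝ) < 2 * V := by linarith
  have hε' : (0:ℝ) < ε / (2 * V) := div_pos hε h2V
  filter_upwards [claim (ε / (2 * V)) hε', eventually_ge_atTop (i₀ + 1)] with i hub hge
  rw [pi_norm_lt_iff hε]
  intro j
  have h0 : 0 ≤ x i j := hx0 i hge j
  have h1 : x i j ≤ ε / (2 * V) * v j := hub j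
  have h2 : ε / (2 * V) * v j ≤ ε / 2 := by
    rw [div_mul_eq_mul_div, div_le_div_iff₀ h2V (by norm_num)]
    have h3 : ε * v j ≤ ε * V := mul_le_mul_of_nonneg_left (hVj j) hε.le
    linarith
  rw [Real.norm_eq_abs, abs_of_nonneg h0]
  linarith
end
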